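/- The operators L₊, L₋, K satisfy L₊L₋ = L₋L₊, L₊K = q^{−1}KL₊, L₋K = qKL₋, and K^p = id, i.e. they define a representation ℒ^λ of the quantum algebra U_q(e(1,1)) at q^p = 1 on ℂ^p. Moreover, if λ = (λ₊, λ₋) ≠ (0,0), this p-dimensional representation is irreducible: the only ℂ-subspaces of ℂ^p invariant under all three operators L₊, L₋, K are {0} and ℂ^p. -/
import Mathlib


noncomputable section

/-- `q = exp(2πi/p)`, a primitive `p`-th root of unity. -/
def q (p : ℕ) : ℂ := Complex.exp (2 * Real.pi * Complex.I / p)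

/-- `L₊ : v_m ↦ λ₊ v_{m+1}` on `ℂ^p` with basis `(v_m)_{m ∈ ℤ/pℤ}`. -/
def Lplus (p : ℕ) (l : ℂ) : Module.End ℂ (ZMod p → ℂ) where
  toFun x := fun m => l * x (m - 1)
  map_add' x y := by funext m; simp [mul_add]
  map_smul' c x := by funext m; simp [smul_eq_mul]; ring

/-- `L₋ : v_m ↦ λ₋ v_{m−1}` on `ℂ^p`. -/
def Lminus (p : ℕ) (l : ℂ) : Module.End ℂ (ZMod p → ℂ) where
  toFun x := fun m => l * x (m + 1)
  map_add' x y := by funext m; simp [mul_add]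
  map_smul' c x := by funext m; simp [smul_eq_mul]; ring

/-- `K : v_m ↦ q^m v_m` on `ℂ^p`. -/
def Kop (p : ℕ) : Module.End ℂ (ZMod p → ℂ) where
  toFun x := fun m => q p ^ m.val * x m
  map_add' x y := by funext m; simp [mul_add]
  map_smul' c x := by funext m; simp [smul_eq_mul]; ring

lemma q_prim {p : ℕ} (hp : p ≠ 0) : IsPrimitiveRoot (q p) p :=
  Complex.isPrimitiveRoot_exp p hp

lemma q_pow_p {p : ℕ} (hp : p ≠ 0) : q p ^ p = 1 := (q_prim hp).pow_eq_one

lemma q_ne_zero (p : ℕ) : q p ≠ 0 := Complex.exp_ne_zero _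

lemma q_pow_congr {p : ℕ} (hp : p ≠ 0) {a b : ℕ} (h : a % p = b % p) :
    q p ^ a = q p ^ b := by
  conv_lhs => rw [← Nat.div_add_mod a p]
  conv_rhs => rw [← Nat.div_add_mod b p]
  rw [pow_add, pow_add, pow_mul, pow_mul, q_pow_p hp, h]
  simp

lemma Kop_pow_apply {p : ℕ} (j : ℕ) (x : ZMod p → ℂ) (m : ZMod p) :
    (Kop p ^ j) x m = q p ^ (j * m.val) * x m := by
  induction j with
  | zero => simp
  | succ n ih =>
    rw [pow_succ', Module.End.mul_apply]
    show q p ^ m.val * ((Kop p ^ n) x m) = _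
    rw [ih, ← mul_assoc, ← pow_add]
    ring_nf

/-- the "delta function at `m₀` with value `c`" lies in every invariant subspace
containing a vector whose `m₀`-coordinate is `c`. -/
lemma delta_mem {p : ℕ} (hp0 : p ≠ 0) (W : Submodule ℂ (ZMod p → ℂ))
    (hK : ∀ x ∈ W, Kop p x ∈ W) (w : ZMod p → ℂ) (hw : w ∈ W) (m₀ : ZMod p) :
    (fun m => if m = m₀ then w m₀ else 0) ∈ W := by
  haveI : NeZero p := ⟨hp0⟩
  have hKj : ∀ j : ℕ, (Kop p ^ j) w ∈ W := by
    intro j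
    induction j with
    | zero => simpa using hw
    | succ n ih =>
      rw [pow_succ']
      exact hK _ ih
  set S : ZMod p → ℂ :=
    ∑ j ∈ Finset.range p, (q p ^ (j * (p - m₀.val))) • ((Kop p ^ j) w) with hSdef
  have hS : S ∈ W := Submodule.sum_mem _ fun j _ => Submodule.smul_mem _ _ (hKj j)
  have hSval : ∀ m : ZMod p, S m = (if m = m₀ then (p : ℂ) * w m₀ else 0) := by
    intro m
    have h1 : S m = (∑ j ∈ Finset.range p, (q p ^ (p - m₀.val + m.val)) ^ j) * w m := by
      rw [hSdef, Finset.sum_apply, Finset.sum_mul]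
      refine Finset.sum_congr rfl fun j _ => ?_
      rw [Pi.smul_apply, smul_eq_mul, Kop_pow_apply, ← mul_assoc, ← pow_add,
        ← pow_mul]
      ring_nf
    rw [h1]
    by_cases hm : m = m₀
    · subst hm
      have h2 : p - m.val + m.val = p := Nat.sub_add_cancel (ZMod.val_lt m).le
      rw [h2, q_pow_p hp0]
      simp
    · have hlt₀ : m₀.val < p := ZMod.val_lt m₀
      have hlt : m.val < p := ZMod.val_lt m
      have hne : m.val ≠ m₀.val := fun h => hm (by
        have := congrArg (Nat.cast : ℕ → ZMod p) h
        rwa [ZMod.natCast_val, ZMod.natCast_val, ZMod.cast_id, ZMod.cast_id] at this)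
      have hr1 : q p ^ (p - m₀.val + m.val) ≠ 1 := by
        intro h
        obtain ⟨k, hk⟩ := ((q_prim hp0).pow_eq_one_iff_dvd _).mp h
        rcases k with _ | _ | k
        · simp at hk; omega
        · simp at hk; omega
        · have h2 : 2 * p ≤ p * (k + 1 + 1) := by nlinarith
          rw [← hk] at h2; omega
      have hrp : (q p ^ (p - m₀.val + m.val)) ^ p = 1 := by
        rw [← pow_mul, mul_comm, pow_mul, q_pow_p hp0, one_pow]
      rw [geom_sum_eq hr1, hrp]
      simp [hm]
  have heq : (fun m => if m = m₀ then w m₀ else 0) = (p : ℂ)⁻¹ • S := by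
    funext m
    rw [Pi.smul_apply, hSval m, smul_eq_mul]
    have hpC : (p : ℂ) ≠ 0 := Nat.cast_ne_zero.mpr hp0
    by_cases h : m = m₀ <;> simp [h]
    field_simp
  rw [heq]
  exact Submodule.smul_mem _ _ hS

/-- reaching all deltas by repeated shifting -/
lemma reach {p : ℕ} (W : Submodule ℂ (ZMod p → ℂ)) (l : ℂ) (hl : l ≠ 0) (d : ZMod p)
    (hstep : ∀ (m : ZMod p) (c : ℂ), (fun m' => if m' = m then c else 0) ∈ W →
      (fun m' => if m' = m + d then l * c else 0) ∈ W)
    (m₀ : ZMod p) (c₀ : ℂ) (hc₀ : c₀ ≠ 0)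
    (h0 : (fun m' => if m' = m₀ then c₀ else 0) ∈ W)
    (hd : ∀ m : ZMod p, ∃ n : ℕ, m₀ + n • d = m) :
    ∀ m : ZMod p, ∃ c : ℂ, c ≠ 0 ∧ (fun m' => if m' = m then c else 0) ∈ W := by
  have key : ∀ n : ℕ, (fun m' => if m' = m₀ + n • d then l ^ n * c₀ else 0) ∈ W := by
    intro n
    induction n with
    | zero => simpa using h0
    | succ n ih =>
      have := hstep _ _ ih
      have harith : m₀ + n • d + d = m₀ + (n + 1) • d := by
        rw [succ_nsmul]; ring
      rw [harith] at this
      convert this using 2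
      ring
  intro m
  obtain ⟨n, hn⟩ := hd m
  exact ⟨l ^ n * c₀, mul_ne_zero (pow_ne_zero _ hl) hc₀, by rw [← hn]; exact key n⟩

lemma top_of_deltas {p : ℕ} (hp0 : p ≠ 0) (W : Submodule ℂ (ZMod p → ℂ))
    (h : ∀ m : ZMod p, ∃ c : ℂ, c ≠ 0 ∧ (fun m' => if m' = m then c else 0) ∈ W) :
    W = ⊤ := by
  haveI : NeZero p := ⟨hp0⟩
  refine Submodule.eq_top_iff'.mpr fun x => ?_
  have hx : x = ∑ m : ZMod p, x m • (fun m' => if m' = m then (1 : ℂ) else 0) := by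
    funext m'
    rw [Finset.sum_apply]
    simp [Finset.sum_ite_eq]
  rw [hx]
  refine Submodule.sum_mem _ fun m _ => Submodule.smul_mem _ _ ?_
  obtain ⟨c, hc, hmem⟩ := h m
  have : (fun m' => if m' = m then (1 : ℂ) else 0) =
      c⁻¹ • (fun m' => if m' = m then c else 0) := by
    funext m'
    by_cases h' : m' = m <;> simp [h', inv_mul_cancel₀ hc]
  rw [this]
  exact Submodule.smul_mem _ _ hmem

/-- `L₊, L₋, K` satisfy the defining relations of `U_q(e(1,1))` at `q^p = 1`,
and for `λ ≠ (0,0)` the resulting `p`-dimensional representation is irreducible. -/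
theorem statement6 (p : ℕ) (hp : Odd p) (hp3 : 3 ≤ p) (lp lm : ℂ) :
    (Lplus p lp * Lminus p lm = Lminus p lm * Lplus p lp) ∧
    (Lplus p lp * Kop p = (q p)⁻¹ • (Kop p * Lplus p lp)) ∧
    (Lminus p lm * Kop p = q p • (Kop p * Lminus p lm)) ∧
    (Kop p ^ p = 1) ∧
    ((lp, lm) ≠ (0, 0) →
      ∀ W : Submodule ℂ (ZMod p → ℂ),
        (∀ x ∈ W, Lplus p lp x ∈ W) →
        (∀ x ∈ W, Lminus p lm x ∈ W) →
        (∀ x ∈ W, Kop p x ∈ W) →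
        W = ⊥ ∨ W = ⊤) := by
  have hp0 : p ≠ 0 := by omega
  haveI : NeZero p := ⟨hp0⟩
  refine ⟨?_, ?_, ?_, ?_, ?_⟩
  · refine LinearMap.ext fun x => funext fun m => ?_
    show lp * (lm * x (m - 1 + 1)) = lm * (lp * x (m + 1 - 1))
    rw [sub_add_cancel, add_sub_cancel_right]
    ring
  · refine LinearMap.ext fun x => funext fun m => ?_
    show lp * (q p ^ (m - 1).val * x (m - 1)) =
      (q p)⁻¹ * (q p ^ m.val * (lp * x (m - 1)))
    have hq : q p ^ (m - 1).val * q p = q p ^ m.val := by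
      rw [← pow_succ]
      apply q_pow_congr hp0
      have : (((m - 1).val + 1 : ℕ) : ZMod p) = (m.val : ZMod p) := by
        push_cast
        rw [ZMod.natCast_val, ZMod.natCast_val, ZMod.cast_id, ZMod.cast_id]
        ring
      have := (ZMod.natCast_eq_natCast_iff _ _ _).mp this
      simpa [Nat.ModEq] using this
    field_simp [q_ne_zero p]
    rw [← hq]
    ring
  · refine LinearMap.ext fun x => funext fun m => ?_
    show lm * (q p ^ (m + 1).val * x (m + 1)) =
      q p * (q p ^ m.val * (lm * x (m + 1)))
    have hq : q p ^ (m + 1).val = q p ^ m.val * q p := by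
      rw [← pow_succ]
      apply q_pow_congr hp0
      have : (((m + 1).val : ℕ) : ZMod p) = ((m.val + 1 : ℕ) : ZMod p) := by
        push_cast
        rw [ZMod.natCast_val, ZMod.natCast_val, ZMod.cast_id, ZMod.cast_id]
      have := (ZMod.natCast_eq_natCast_iff _ _ _).mp this
      simpa [Nat.ModEq] using this
    rw [hq]
    ring
  · refine LinearMap.ext fun x => funext fun m => ?_
    rw [Kop_pow_apply]
    show q p ^ (p * m.val) * x m = x m
    rw [pow_mul, q_pow_p hp0, one_pow, one_mul]
  · intro hlz W hLp hLm hK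
    by_cases hbot : W = ⊥
    · exact Or.inl hbot
    right
    obtain ⟨w, hw, hwne⟩ := Submodule.exists_mem_ne_zero_of_ne_bot hbot
    obtain ⟨m₀, hm₀⟩ : ∃ m₀, w m₀ ≠ 0 := by
      by_contra h
      push_neg at h
      exact hwne (funext h)
    have hdelta := delta_mem hp0 W hK w hw m₀
    have hlplm : lp ≠ 0 ∨ lm ≠ 0 := by
      by_contra h
      push_neg at h
      exact hlz (by rw [h.1, h.2])
    rcases hlplm with hlp | hlm
    · refine top_of_deltas hp0 W (reach W lp hlp 1 ?_ m₀ (w m₀) hm₀ hdelta ?_)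
      · intro m c hc
        have := hLp _ hc
        have heq : (Lplus p lp) (fun m' => if m' = m then c else 0) =
            fun m' => if m' = m + 1 then lp * c else 0 := by
          funext m'
          show lp * (if m' - 1 = m then c else 0) = _
          have : m' - 1 = m ↔ m' = m + 1 := sub_eq_iff_eq_add
          by_cases h' : m' - 1 = m
          · rw [if_pos h', if_pos (this.mp h')]
          · rw [if_neg h', if_neg (fun hh => h' (this.mpr hh)), mul_zero]
        rwa [heq] at this
      · intro m
        refine ⟨(m - m₀).val, ?_⟩
        rw [nsmul_eq_mul, mul_one, ZMod.natCast_val, ZMod.cast_id]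
        ring
    · refine top_of_deltas hp0 W (reach W lm hlm (-1) ?_ m₀ (w m₀) hm₀ hdelta ?_)
      · intro m c hc
        have := hLm _ hc
        have heq : (Lminus p lm) (fun m' => if m' = m then c else 0) =
            fun m' => if m' = m + (-1) then lm * c else 0 := by
          funext m'
          show lm * (if m' + 1 = m then c else 0) = _
          have : m' + 1 = m ↔ m' = m + (-1) := by
            rw [← sub_eq_add_neg]
            exact eq_sub_iff_add_eq.symm
          by_cases h' : m' + 1 = m
          · rw [if_pos h', if_pos (this.mp h')]
          · rw [if_neg h', if_neg (fun hh => h' (this.mpr hh)), mul_zero]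
        rwa [heq] at this
      · intro m
        refine ⟨(m₀ - m).val, ?_⟩
        rw [nsmul_eq_mul, ZMod.natCast_val, ZMod.cast_id]
        ring
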